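/- Let G be an undirected graph with positive edge weights. Any walk from s visiting every color uses at most 2·|E(G)| edge traversals if it has minimum weight among all walks from s visiting every color; consequently a minimum-weight color-covering walk has at most 2·|E(G)| edges. -/
import Mathlib

open SimpleGraph

/-- The total weight of a walk: sum of edge weights with multiplicity. -/
def walkWeight {V : Type*} {G : SimpleGraph V} (w : V → V → ℝ) {u v : V}
    (p : G.Walk u v) : ℝ :=
  (p.darts.map (fun d => w d.fst d.snd)).sum

lemma walkWeight_append {V : Type*} {G : SimpleGraph V} (w : V → V → ℝ) {u v x : V}
    (p : G.Walk u v) (q : G.Walk v x) :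
    walkWeight w (p.append q) = walkWeight w p + walkWeight w q := by
  simp [walkWeight, Walk.darts_append]

lemma walkWeight_cons {V : Type*} {G : SimpleGraph V} (w : V → V → ℝ) {u v x : V}
    (h : G.Adj u v) (p : G.Walk v x) :
    walkWeight w (Walk.cons h p) = w u v + walkWeight w p := by
  simp [walkWeight]

lemma walkWeight_reverse {V : Type*} {G : SimpleGraph V} (w : V → V → ℝ)
    (hw : ∀ a b, w a b = w b a) {u v : V} (p : G.Walk u v) :
    walkWeight w p.reverse = walkWeight w p := by
  simp only [walkWeight, Walk.darts_reverse, List.map_reverse, List.sum_reverse,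
    List.map_map]
  congr 1
  apply List.map_congr_left
  intro d _
  exact hw _ _

lemma dart_decomp {V : Type*} {G : SimpleGraph V} {s t : V} (p : G.Walk s t)
    (d : G.Dart) (hd : d ∈ p.darts) :
    ∃ (q : G.Walk s d.fst) (r : G.Walk d.snd t),
      p = q.append (Walk.cons d.adj r) ∧ d ∉ q.darts := by
  induction p with
  | nil => simp at hd
  | cons h p' ih =>
    rename_i a b c
    rw [Walk.darts_cons, List.mem_cons] at hd
    by_cases hdd : d = ⟨(a, b), h⟩
    · subst hdd
      exact ⟨Walk.nil, p', rfl, by simp⟩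
    · rcases hd with hd | hd
      · exact absurd hd hdd
      · obtain ⟨q, r, heq, hnq⟩ := ih hd
        refine ⟨Walk.cons h q, r, ?_, ?_⟩
        · rw [Walk.cons_append, heq]
        · simp only [Walk.darts_cons, List.mem_cons]
          rintro (h1 | h1)
          exacts [hdd h1, hnq h1]

theorem stmt5 {V C : Type*} [Fintype V] [DecidableEq V] {G : SimpleGraph V}
    [DecidableRel G.Adj]
    (w : V → V → ℝ) (hw : ∀ a b, w a b = w b a)
    (hpos : ∀ a b, G.Adj a b → 0 < w a b)
    (κ : V → C) {s t : V} (p : G.Walk s t)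
    (hcov : ∀ c ∈ Set.range κ, ∃ v ∈ p.support, κ v = c)
    (hmin : ∀ (t' : V) (q : G.Walk s t'),
      (∀ c ∈ Set.range κ, ∃ v ∈ q.support, κ v = c) →
      walkWeight w p ≤ walkWeight w q) :
    p.length ≤ 2 * G.edgeFinset.card := by
  have hnodup : p.darts.Nodup := by
    by_contra hnd
    obtain ⟨d, hdup⟩ := List.exists_duplicate_iff_not_nodup.mpr hnd
    have hcount : 2 ≤ p.darts.count d := List.duplicate_iff_two_le_count.mp hdup
    obtain ⟨q, r, heq, hnq⟩ := dart_decomp p d hdup.mem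
    have hdr : d ∈ r.darts := by
      have : p.darts = q.darts ++ d :: r.darts := by
        rw [heq, Walk.darts_append, Walk.darts_cons]
      rw [this] at hcount
      simp only [List.count_append, List.count_cons_self] at hcount
      rw [List.count_eq_zero_of_not_mem hnq] at hcount
      have : 1 ≤ r.darts.count d := by omega
      exact List.count_pos_iff.mp this
    obtain ⟨b, c, heq2, -⟩ := dart_decomp r d hdr
    let q' : G.Walk s t := q.append (b.reverse.append c)
    have hq' : q' = q.append (b.reverse.append c) := rfl
    have hsup : ∀ x ∈ p.support, x ∈ q'.support := by
      intro x hx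
      rw [heq, heq2] at hx
      rw [Walk.mem_support_append_iff, Walk.support_cons, List.mem_cons] at hx
      rw [hq', Walk.mem_support_append_iff, Walk.mem_support_append_iff]
      rcases hx with hx | hx | hx
      · exact Or.inl hx
      · subst hx; exact Or.inr (Or.inl (by simp [Walk.support_reverse]))
      · rw [Walk.mem_support_append_iff, Walk.support_cons, List.mem_cons] at hx
        rcases hx with hx | hx | hx
        · exact Or.inr (Or.inl (by simp [Walk.support_reverse, hx]))
        · subst hx
          exact Or.inr (Or.inl (by simp [Walk.support_reverse]))
        · exact Or.inr (Or.inr hx)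
    have hcov' : ∀ c' ∈ Set.range κ, ∃ x ∈ q'.support, κ x = c' := by
      intro c' hc'
      obtain ⟨x, hx, hkx⟩ := hcov c' hc'
      exact ⟨x, hsup x hx, hkx⟩
    have hle := hmin t q' hcov'
    have hwq' : walkWeight w q' = walkWeight w q + walkWeight w b + walkWeight w c := by
      rw [hq', walkWeight_append, walkWeight_append, walkWeight_reverse w hw]
      ring
    have hwp : walkWeight w p =
        walkWeight w q + w d.fst d.snd + walkWeight w b + w d.fst d.snd + walkWeight w c := by
      rw [heq, heq2, walkWeight_append, walkWeight_cons, walkWeight_append,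
        walkWeight_cons]
      ring
    have hpos' := hpos d.fst d.snd d.adj
    rw [hwp, hwq'] at hle
    linarith
  have := hnodup.length_le_card
  rw [SimpleGraph.dart_card_eq_twice_card_edges] at this
  rwa [Walk.length_darts] at this
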